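/- arXiv:math/0306288 — 3 statements merged into one kernel-verified Lean document; each statement's English description precedes it below -/
import Mathlib

section
/- Let H be a Hopf algebra with bijective antipode S over a field k, and let M be a left H-module and left H-comodule satisfying the left-left anti-Yetter-Drinfeld condition: Δ_M(hm) = h^{(1)} m^{(-1)} S^{-1}(h^{(3)}) ⊗ h^{(2)} m^{(0)} for all h ∈ H, m ∈ M. Then the map M → M given by m ↦ m^{(-1)} m^{(0)} (coaction followed by action) is both H-linear and H-colinear. -/
open TensorProduct

namespace HC

variable {k : Type} [Field k]
variable {H : Type} [Ring H] [Algebra k H]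
variable {M : Type} [AddCommGroup M] [Module k M]

/-- `act` is a left module structure (in curried linear form). -/
def IsLAct (act : H →ₗ[k] M →ₗ[k] M) : Prop :=
  act 1 = LinearMap.id ∧ ∀ g h : H, act (g * h) = (act g) ∘ₗ (act h)

/-- Coassociativity and counitality of a left coaction `coact : M → H ⊗ M`,
with respect to a coproduct `Δ` and counit `ε` on `H`. -/
def IsLCoact (Δ : H →ₗ[k] H ⊗[k] H) (ε : H →ₗ[k] k)
    (coact : M →ₗ[k] H ⊗[k] M) : Prop :=
  ((TensorProduct.map Δ LinearMap.id) ∘ₗ coact =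
    ((TensorProduct.assoc k H H M).symm.toLinearMap) ∘ₗ
      (TensorProduct.map LinearMap.id coact) ∘ₗ coact) ∧
  (∀ m : M, (TensorProduct.lid k M) ((TensorProduct.map ε LinearMap.id) (coact m)) = m)

/-- The left-left anti-Yetter-Drinfeld condition
`Δ_M(hm) = h⁽¹⁾ m⁽⁻¹⁾ S⁻¹(h⁽³⁾) ⊗ h⁽²⁾ m⁽⁰⁾`, phrased via arbitrary finite
Sweedler representations of the (iterated) coproduct and of the coaction. -/
def AYDll (Δ : H →ₗ[k] H ⊗[k] H) (Sinv : H →ₗ[k] H)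
    (act : H →ₗ[k] M →ₗ[k] M) (coact : M →ₗ[k] H ⊗[k] M) : Prop :=
  ∀ (h : H) (m : M) (s : Finset ℕ) (a b : ℕ → H)
    (t : ℕ → Finset ℕ) (c d : ℕ → ℕ → H)
    (u : Finset ℕ) (e : ℕ → H) (m0 : ℕ → M),
    Δ h = ∑ i ∈ s, a i ⊗ₜ b i →
    (∀ i ∈ s, Δ (b i) = ∑ j ∈ t i, c i j ⊗ₜ d i j) →
    coact m = ∑ l ∈ u, e l ⊗ₜ m0 l →
    coact (act h m) = ∑ i ∈ s, ∑ j ∈ t i, ∑ l ∈ u,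
      (a i * e l * Sinv (d i j)) ⊗ₜ act (c i j) (m0 l)

end HC

open HC TensorProduct

/-!
Linearity: by the anti-Yetter-Drinfeld condition,
`(hm)⁽⁻¹⁾(hm)⁽⁰⁾ = h⁽¹⁾ m⁽⁻¹⁾ S⁻¹(h⁽³⁾) h⁽²⁾ m⁽⁰⁾`, and `S⁻¹(h⁽³⁾) h⁽²⁾ = ε(h⁽²⁾)` collapses
this to `h m⁽⁻¹⁾ m⁽⁰⁾`.

Colinearity: applying the condition to every term of `m⁽⁻¹⁾ m⁽⁰⁾` and using coassociativity of
the coaction twice, `Δ_M(m⁽⁻¹⁾ m⁽⁰⁾) = m⁽⁻¹⁾ n⁽⁰⁾⁽⁻¹⁾ S⁻¹(n⁽⁻¹⁾) ⊗ m⁽⁰⁾⁽⁻¹⁾ n⁽⁰⁾⁽⁰⁾` with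
`n = m⁽⁰⁾⁽⁰⁾`. Coassociativity once more, together with `x⁽²⁾ S⁻¹(x⁽¹⁾) = ε(x)`, gives
`n⁽⁰⁾⁽⁻¹⁾ S⁻¹(n⁽⁻¹⁾) ⊗ n⁽⁰⁾⁽⁰⁾ = 1 ⊗ n`, which leaves `m⁽⁻¹⁾ ⊗ m⁽⁰⁾⁽⁻¹⁾ m⁽⁰⁾⁽⁰⁾`.
-/

namespace HC

section Sweedler

variable {R A B C : Type*} [CommSemiring R] [AddCommMonoid A] [AddCommMonoid B]
  [AddCommMonoid C] [Module R A] [Module R B] [Module R C]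

/-- Chosen once for every `x`, so that iterated coactions can be written as nested sums. -/
noncomputable def tmulRepr (x : A ⊗[R] B) : Finset (A × B) :=
  (exists_finset x).choose

theorem sum_tmulRepr (x : A ⊗[R] B) : ∑ p ∈ tmulRepr x, p.1 ⊗ₜ[R] p.2 = x :=
  (exists_finset x).choose_spec.symm

theorem lift_eq_sum_tmulRepr (f : A →ₗ[R] B →ₗ[R] C) (x : A ⊗[R] B) :
    lift f x = ∑ p ∈ tmulRepr x, f p.1 p.2 := by
  conv_lhs => rw [← sum_tmulRepr x]
  simp [map_sum]

theorem exists_finset_nat_sum_tmul_eq (x : A ⊗[R] B) :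
    ∃ (s : Finset ℕ) (a : ℕ → A) (b : ℕ → B), x = ∑ i ∈ s, a i ⊗ₜ[R] b i := by
  obtain ⟨n, a, b, rfl⟩ := exists_sum_tmul_eq x
  refine ⟨Finset.range n, fun i ↦ if h : i < n then a ⟨i, h⟩ else 0,
    fun i ↦ if h : i < n then b ⟨i, h⟩ else 0, ?_⟩
  simp [Finset.sum_range]

end Sweedler

section InverseAntipode

open HopfAlgebra

variable {R A ι : Type*} [CommSemiring R] [Semiring A] [HopfAlgebra R A] {Sinv : A →ₗ[R] A}

theorem inv_antipode_one (hS : ∀ a, Sinv (antipode R a) = a) : Sinv 1 = 1 := by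
  simpa using hS 1

theorem inv_antipode_mul_antidistrib (hS : ∀ a, Sinv (antipode R a) = a)
    (hS' : ∀ a, antipode R (Sinv a) = a) (a b : A) : Sinv (a * b) = Sinv b * Sinv a := by
  conv_lhs => rw [← hS' a, ← hS' b, ← antipode_mul_antidistrib]
  exact hS _

theorem sum_inv_antipode_right_mul_eq_smul (hS : ∀ a, Sinv (antipode R a) = a)
    (hS' : ∀ a, antipode R (Sinv a) = a) {a : A} (𝓡 : Coalgebra.Repr R a ι) :
    ∑ i ∈ 𝓡.index, Sinv (𝓡.right i) * 𝓡.left i = Coalgebra.counit (R := R) a • 1 := by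
  calc ∑ i ∈ 𝓡.index, Sinv (𝓡.right i) * 𝓡.left i
      = Sinv (∑ i ∈ 𝓡.index, antipode R (𝓡.left i) * 𝓡.right i) := by
        simp only [map_sum, inv_antipode_mul_antidistrib hS hS', hS]
    _ = Coalgebra.counit (R := R) a • 1 := by
        rw [sum_antipode_mul_eq_smul, map_smul, inv_antipode_one hS]

theorem sum_right_mul_inv_antipode_eq_smul (hS : ∀ a, Sinv (antipode R a) = a)
    (hS' : ∀ a, antipode R (Sinv a) = a) {a : A} (𝓡 : Coalgebra.Repr R a ι) :
    ∑ i ∈ 𝓡.index, 𝓡.right i * Sinv (𝓡.left i) = Coalgebra.counit (R := R) a • 1 := by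
  calc ∑ i ∈ 𝓡.index, 𝓡.right i * Sinv (𝓡.left i)
      = Sinv (∑ i ∈ 𝓡.index, 𝓡.left i * antipode R (𝓡.right i)) := by
        simp only [map_sum, inv_antipode_mul_antidistrib hS hS', hS]
    _ = Coalgebra.counit (R := R) a • 1 := by
        rw [sum_mul_antipode_eq_smul, map_smul, inv_antipode_one hS]

end InverseAntipode

section Comodule

variable {k H M : Type} {X : Type*} [Field k] [Ring H] [Algebra k H] [AddCommGroup M]
  [Module k M] [AddCommGroup X] [Module k X]
  {Δ : H →ₗ[k] H ⊗[k] H} {ε : H →ₗ[k] k} {coact : M →ₗ[k] H ⊗[k] M}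

theorem IsLCoact.sum_counit_smul (hcoact : IsLCoact Δ ε coact) (m : M) :
    ∑ p ∈ tmulRepr (coact m), ε p.1 • p.2 = m := by
  have h := hcoact.2 m
  rw [← sum_tmulRepr (coact m)] at h
  simpa [map_sum] using h

theorem IsLCoact.sum_map_comul_tmul (hcoact : IsLCoact Δ ε coact)
    (Φ : (H ⊗[k] H) ⊗[k] M →ₗ[k] X) (m : M) :
    ∑ p ∈ tmulRepr (coact m), Φ (Δ p.1 ⊗ₜ p.2) =
      ∑ p ∈ tmulRepr (coact m), ∑ q ∈ tmulRepr (coact p.2), Φ ((p.1 ⊗ₜ q.1) ⊗ₜ q.2) := by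
  calc ∑ p ∈ tmulRepr (coact m), Φ (Δ p.1 ⊗ₜ p.2)
      = Φ (map Δ LinearMap.id (coact m)) := by
        conv_rhs => rw [← sum_tmulRepr (coact m)]
        simp [map_sum]
    _ = Φ ((TensorProduct.assoc k H H M).symm (map LinearMap.id coact (coact m))) := by
        simpa using congr(Φ $(LinearMap.congr_fun hcoact.1 m))
    _ = _ := by
        conv_lhs => rw [← sum_tmulRepr (coact m)]
        simp only [map_sum, map_tmul, LinearMap.id_coe, id_eq]
        refine Finset.sum_congr rfl fun p _ ↦ ?_
        conv_lhs => rw [← sum_tmulRepr (coact p.2)]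
        simp only [tmul_sum, map_sum, assoc_symm_tmul]

end Comodule

section HopfComodule

variable {k H M : Type} [Field k] [Ring H] [HopfAlgebra k H] [AddCommGroup M] [Module k M]
  {coact : M →ₗ[k] H ⊗[k] M} {Sinv : H →ₗ[k] H}

theorem IsLCoact.sum_mul_inv_antipode_tmul
    (hcoact : IsLCoact (Coalgebra.comul (R := k)) (Coalgebra.counit (R := k)) coact)
    (hS : ∀ h, Sinv (HopfAlgebra.antipode k h) = h)
    (hS' : ∀ h, HopfAlgebra.antipode k (Sinv h) = h) (m : M) :
    ∑ p ∈ tmulRepr (coact m), ∑ q ∈ tmulRepr (coact p.2), (q.1 * Sinv p.1) ⊗ₜ[k] q.2 =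
      (1 : H) ⊗ₜ m := by
  let Φ : (H ⊗[k] H) ⊗[k] M →ₗ[k] H ⊗[k] M :=
    (LinearMap.mul' k H ∘ₗ map LinearMap.id Sinv ∘ₗ
      (TensorProduct.comm k H H).toLinearMap).rTensor M
  calc _ = ∑ p ∈ tmulRepr (coact m), ∑ q ∈ tmulRepr (coact p.2), Φ ((p.1 ⊗ₜ q.1) ⊗ₜ q.2) := by
        simp [Φ]
    _ = ∑ p ∈ tmulRepr (coact m), Φ (Coalgebra.comul p.1 ⊗ₜ p.2) :=
        (hcoact.sum_map_comul_tmul Φ m).symm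
    _ = ∑ p ∈ tmulRepr (coact m), (Coalgebra.counit (R := k) p.1 • (1 : H)) ⊗ₜ p.2 := by
        refine Finset.sum_congr rfl fun p _ ↦ ?_
        rw [← (Coalgebra.Repr.arbitrary k p.1).eq]
        simp [Φ, map_sum, sum_right_mul_inv_antipode_eq_smul hS hS']
    _ = (1 : H) ⊗ₜ m := by
        conv_rhs => rw [← hcoact.sum_counit_smul m]
        simp only [tmul_sum, smul_tmul]

end HopfComodule

section AntiYetterDrinfeld

variable {k H M : Type} [Field k] [AddCommGroup M] [Module k M]

section Algebra

variable [Ring H] [Algebra k H]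

/-- The right-hand side of the anti-Yetter-Drinfeld condition as a linear function of
`(h⁽¹⁾ ⊗ (h⁽²⁾ ⊗ h⁽³⁾)) ⊗ (m⁽⁻¹⁾ ⊗ m⁽⁰⁾)`, hence free of any choice of Sweedler
representations. -/
noncomputable def aydMap (Sinv : H →ₗ[k] H) (act : H →ₗ[k] M →ₗ[k] M) :
    (H ⊗[k] (H ⊗[k] H)) ⊗[k] (H ⊗[k] M) →ₗ[k] H ⊗[k] M :=
  (LinearMap.mul' k H).rTensor M ∘ₗ (TensorProduct.assoc k H H M).symm.toLinearMap ∘ₗ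
    map (LinearMap.mul' k H) (map Sinv (lift act) ∘ₗ (TensorProduct.assoc k H H M).toLinearMap ∘ₗ
      (TensorProduct.comm k H H).toLinearMap.rTensor M) ∘ₗ
    (tensorTensorTensorComm k H (H ⊗[k] H) H M).toLinearMap

variable {Δ : H →ₗ[k] H ⊗[k] H} {coact : M →ₗ[k] H ⊗[k] M}
  {Sinv : H →ₗ[k] H} {act : H →ₗ[k] M →ₗ[k] M}

@[simp]
theorem aydMap_tmul (a c d e : H) (m : M) :
    aydMap Sinv act ((a ⊗ₜ (c ⊗ₜ d)) ⊗ₜ (e ⊗ₜ m)) = (a * e * Sinv d) ⊗ₜ act c m := by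
  simp [aydMap]

theorem AYDll.coact_act (hAYD : AYDll Δ Sinv act coact) (h : H) (m : M) :
    coact (act h m) = aydMap Sinv act (Δ.lTensor H (Δ h) ⊗ₜ coact m) := by
  obtain ⟨s, a, b, hh⟩ := exists_finset_nat_sum_tmul_eq (Δ h)
  choose t c d hb using fun i ↦ exists_finset_nat_sum_tmul_eq (Δ (b i))
  obtain ⟨u, e, n, hm⟩ := exists_finset_nat_sum_tmul_eq (coact m)
  rw [hAYD h m s a b t c d u e n hh (fun i _ ↦ hb i) hm, hh, hm]
  simp only [map_sum, LinearMap.lTensor_tmul, hb, tmul_sum, sum_tmul, aydMap_tmul]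
  exact (Finset.sum_comm.trans (Finset.sum_congr rfl fun i _ ↦ Finset.sum_comm)).symm

theorem IsLAct.act_mul_apply (hact : IsLAct act) (g h : H) (m : M) :
    act (g * h) m = act g (act h m) := by
  rw [hact.2]
  rfl

end Algebra

variable [Ring H] [HopfAlgebra k H] {coact : M →ₗ[k] H ⊗[k] M}
  {Sinv : H →ₗ[k] H} {act : H →ₗ[k] M →ₗ[k] M}

theorem lift_aydMap_tmul_comul (hS : ∀ h, Sinv (HopfAlgebra.antipode k h) = h)
    (hS' : ∀ h, HopfAlgebra.antipode k (Sinv h) = h) (hact : IsLAct act) (a b : H)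
    (y : H ⊗[k] M) :
    lift act (aydMap Sinv act ((a ⊗ₜ Coalgebra.comul b) ⊗ₜ y)) =
      Coalgebra.counit (R := k) b • act a (lift act y) := by
  induction y with
  | zero => simp
  | add y z hy hz => simp only [tmul_add, map_add, hy, hz, smul_add]
  | tmul e n =>
    let 𝓡 := Coalgebra.Repr.arbitrary k b
    calc lift act (aydMap Sinv act ((a ⊗ₜ Coalgebra.comul b) ⊗ₜ (e ⊗ₜ n)))
        = ∑ j ∈ 𝓡.index, act (a * e * Sinv (𝓡.right j)) (act (𝓡.left j) n) := by
          rw [← 𝓡.eq]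
          simp [map_sum, tmul_sum, sum_tmul]
      _ = act (a * e * ∑ j ∈ 𝓡.index, Sinv (𝓡.right j) * 𝓡.left j) n := by
          simp only [← hact.act_mul_apply, mul_assoc, Finset.mul_sum, map_sum,
            LinearMap.sum_apply]
      _ = Coalgebra.counit (R := k) b • act a (act e n) := by
          rw [sum_inv_antipode_right_mul_eq_smul hS hS', mul_smul_comm, mul_one, map_smul,
            LinearMap.smul_apply, hact.act_mul_apply]

theorem AYDll.lift_coact_act (hS : ∀ h, Sinv (HopfAlgebra.antipode k h) = h)
    (hS' : ∀ h, HopfAlgebra.antipode k (Sinv h) = h) (hact : IsLAct act)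
    (hAYD : AYDll (Coalgebra.comul (R := k)) Sinv act coact) (h : H) (m : M) :
    lift act (coact (act h m)) = act h (lift act (coact m)) := by
  let 𝓡 := Coalgebra.Repr.arbitrary k h
  have hcounit : ∑ i ∈ 𝓡.index, Coalgebra.counit (R := k) (𝓡.right i) • 𝓡.left i = h := by
    have := congr(TensorProduct.rid k H $(Coalgebra.sum_tmul_counit_eq 𝓡))
    simpa only [map_sum, rid_tmul, one_smul] using this
  rw [hAYD.coact_act, ← 𝓡.eq]
  simp only [map_sum, LinearMap.lTensor_tmul, sum_tmul, lift_aydMap_tmul_comul hS hS' hact]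
  conv_rhs => rw [← hcounit]
  simp [map_sum]

theorem sum_aydMap_comul_tmul_coact (hS : ∀ h, Sinv (HopfAlgebra.antipode k h) = h)
    (hS' : ∀ h, HopfAlgebra.antipode k (Sinv h) = h)
    (hcoact : IsLCoact (Coalgebra.comul (R := k)) (Coalgebra.counit (R := k)) coact)
    (x : H) (n : M) :
    ∑ q ∈ tmulRepr (coact n), aydMap Sinv act ((x ⊗ₜ Coalgebra.comul q.1) ⊗ₜ coact q.2) =
      x ⊗ₜ lift act (coact n) := by
  let Φ := aydMap Sinv act ∘ₗ map (TensorProduct.mk k H (H ⊗[k] H) x) coact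
  calc _ = ∑ q ∈ tmulRepr (coact n), Φ (Coalgebra.comul q.1 ⊗ₜ q.2) := rfl
    _ = ∑ q ∈ tmulRepr (coact n), ∑ r ∈ tmulRepr (coact q.2), Φ ((q.1 ⊗ₜ r.1) ⊗ₜ r.2) :=
        hcoact.sum_map_comul_tmul Φ n
    _ = ∑ q ∈ tmulRepr (coact n), x ⊗ₜ act q.1 q.2 := by
        refine Finset.sum_congr rfl fun q _ ↦ ?_
        have := congr(map (LinearMap.mulLeft k x) (act q.1)
          $(hcoact.sum_mul_inv_antipode_tmul hS hS' q.2))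
        simp only [map_sum, map_tmul, LinearMap.mulLeft_apply, mul_one] at this
        rw [← this]
        refine Finset.sum_congr rfl fun r _ ↦ ?_
        simp only [Φ, LinearMap.comp_apply, map_tmul, TensorProduct.mk_apply]
        conv_lhs => rw [← sum_tmulRepr (coact r.2)]
        simp [map_sum, tmul_sum, mul_assoc]
    _ = x ⊗ₜ lift act (coact n) := by
        rw [lift_eq_sum_tmulRepr, tmul_sum]

theorem AYDll.coact_lift_coact (hS : ∀ h, Sinv (HopfAlgebra.antipode k h) = h)
    (hS' : ∀ h, HopfAlgebra.antipode k (Sinv h) = h)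
    (hcoact : IsLCoact (Coalgebra.comul (R := k)) (Coalgebra.counit (R := k)) coact)
    (hAYD : AYDll (Coalgebra.comul (R := k)) Sinv act coact) (m : M) :
    coact (lift act (coact m)) = map LinearMap.id (lift act ∘ₗ coact) (coact m) := by
  let Φ := aydMap Sinv act ∘ₗ map ((Coalgebra.comul (R := k)).lTensor H) coact
  calc coact (lift act (coact m))
      = ∑ p ∈ tmulRepr (coact m), Φ (Coalgebra.comul p.1 ⊗ₜ p.2) := by
        simp [Φ, lift_eq_sum_tmulRepr, map_sum, hAYD.coact_act]
    _ = ∑ p ∈ tmulRepr (coact m), p.1 ⊗ₜ lift act (coact p.2) := by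
        rw [hcoact.sum_map_comul_tmul Φ m]
        refine Finset.sum_congr rfl fun p _ ↦ ?_
        rw [← sum_aydMap_comul_tmul_coact hS hS' hcoact]
        simp [Φ]
    _ = map LinearMap.id (lift act ∘ₗ coact) (coact m) := by
        conv_rhs => rw [← sum_tmulRepr (coact m)]
        simp [map_sum]

end AntiYetterDrinfeld

end HC

/-- For a Hopf algebra `H` with bijective antipode and a
left module, left comodule `M` satisfying the left-left anti-Yetter-Drinfeld
condition, the map `m ↦ m⁽⁻¹⁾ m⁽⁰⁾` (coaction followed by action) is both
`H`-linear and `H`-colinear. -/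
theorem stmt0 {k : Type} [Field k] {H : Type} [Ring H] [HopfAlgebra k H]
    (Sinv : H →ₗ[k] H)
    (hS : ∀ h : H, Sinv (HopfAlgebra.antipode (R := k) h) = h)
    (hS' : ∀ h : H, HopfAlgebra.antipode (R := k) (Sinv h) = h)
    {M : Type} [AddCommGroup M] [Module k M]
    (act : H →ₗ[k] M →ₗ[k] M) (coact : M →ₗ[k] H ⊗[k] M)
    (hact : IsLAct act)
    (hcoact : IsLCoact (Coalgebra.comul (R := k)) (Coalgebra.counit (R := k)) coact)
    (hAYD : AYDll (Coalgebra.comul (R := k)) Sinv act coact) :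
    (∀ (h : H) (m : M),
        ((TensorProduct.lift act) ∘ₗ coact) (act h m) =
          act h (((TensorProduct.lift act) ∘ₗ coact) m)) ∧
    (∀ m : M,
        coact (((TensorProduct.lift act) ∘ₗ coact) m) =
          (TensorProduct.map LinearMap.id ((TensorProduct.lift act) ∘ₗ coact))
            (coact m)) :=
  ⟨hAYD.lift_coact_act hS hS' hact, hAYD.coact_lift_coact hS hS' hcoact⟩
end

section
/- Let H be a Hopf algebra with bijective antipode, N a left-left Yetter-Drinfeld module over H, and M a left-left anti-Yetter-Drinfeld module over H. Then N ⊗ M is a left-left anti-Yetter-Drinfeld module via the diagonal action h(n ⊗ m) = h^{(1)} n ⊗ h^{(2)} m and the codiagonal coaction n ⊗ m ↦ n^{(-1)} m^{(-1)} ⊗ (n^{(0)} ⊗ m^{(0)}). -/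
/-!
In Sweedler notation the coaction of `h (n ⊗ m)` is
`h₁ n₋₁ S(h₃) h₄ m₋₁ S⁻¹(h₆) ⊗ h₂ n₀ ⊗ h₅ m₀`, and `S(h₃) h₄ = ε(h₃)` collapses it to
`h₁ n₋₁ m₋₁ S⁻¹(h₄) ⊗ h₂ n₀ ⊗ h₃ m₀`, the anti-Yetter-Drinfeld expression for `n ⊗ m`.
To make this rigorous, both sides are read as convolution products of linear maps from `H` into
the algebra `H ⊗ (H ⊗ H)`, with one leg for the coaction and one for each action: coassociativity
becomes associativity of the convolution product, and the collapse is `(ℓ ∘ S) * ℓ = 1`.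
-/

open TensorProduct

namespace HC

variable {k : Type} [Field k]
variable {H : Type} [Ring H] [Algebra k H]
variable {M : Type} [AddCommGroup M] [Module k M]

/-- The left-left Yetter-Drinfeld condition
`Δ_N(hn) = h⁽¹⁾ n⁽⁻¹⁾ S(h⁽³⁾) ⊗ h⁽²⁾ n⁽⁰⁾`. -/
def YDll (Δ : H →ₗ[k] H ⊗[k] H) (S : H →ₗ[k] H)
    (act : H →ₗ[k] M →ₗ[k] M) (coact : M →ₗ[k] H ⊗[k] M) : Prop :=
  ∀ (h : H) (m : M) (s : Finset ℕ) (a b : ℕ → H)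
    (t : ℕ → Finset ℕ) (c d : ℕ → ℕ → H)
    (u : Finset ℕ) (e : ℕ → H) (m0 : ℕ → M),
    Δ h = ∑ i ∈ s, a i ⊗ₜ b i →
    (∀ i ∈ s, Δ (b i) = ∑ j ∈ t i, c i j ⊗ₜ d i j) →
    coact m = ∑ l ∈ u, e l ⊗ₜ m0 l →
    coact (act h m) = ∑ i ∈ s, ∑ j ∈ t i, ∑ l ∈ u,
      (a i * e l * S (d i j)) ⊗ₜ act (c i j) (m0 l)

variable {N : Type} [AddCommGroup N] [Module k N]

/-- The diagonal left `H`-action `h (n ⊗ m) = h⁽¹⁾ n ⊗ h⁽²⁾ m` on `N ⊗ M`,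
in curried linear form. -/
noncomputable def diagAct (Δ : H →ₗ[k] H ⊗[k] H)
    (actN : H →ₗ[k] N →ₗ[k] N) (actM : H →ₗ[k] M →ₗ[k] M) :
    H →ₗ[k] (N ⊗[k] M) →ₗ[k] (N ⊗[k] M) :=
  TensorProduct.curry
    ((TensorProduct.map (TensorProduct.lift actN) (TensorProduct.lift actM)) ∘ₗ
      (TensorProduct.tensorTensorTensorComm k H H N M).toLinearMap ∘ₗ
      (TensorProduct.map Δ LinearMap.id))

/-- The codiagonal left coaction `n ⊗ m ↦ n⁽⁻¹⁾ m⁽⁻¹⁾ ⊗ (n⁽⁰⁾ ⊗ m⁽⁰⁾)`. -/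
noncomputable def codiagCoact
    (coactN : N →ₗ[k] H ⊗[k] N) (coactM : M →ₗ[k] H ⊗[k] M) :
    (N ⊗[k] M) →ₗ[k] H ⊗[k] (N ⊗[k] M) :=
  (TensorProduct.map (LinearMap.mul' k H) LinearMap.id) ∘ₗ
    (TensorProduct.tensorTensorTensorComm k H N H M).toLinearMap ∘ₗ
    (TensorProduct.map coactN coactM)

end HC

open TensorProduct WithConv Coalgebra

namespace LinearMap

variable {R C A : Type*} [CommSemiring R] [AddCommMonoid C] [Module R C] [Coalgebra R C]
  [Semiring A] [Algebra R A]

variable (R C) in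
def convConst (a : A) : WithConv (C →ₗ[R] A) := toConv (counit.smulRight a)

lemma convConst_apply (a : A) (c : C) : convConst R C a c = counit (R := R) c • a := rfl

lemma convConst_mul_apply (a : A) (f : WithConv (C →ₗ[R] A)) (c : C) :
    (convConst R C a * f) c = a * f c := by
  conv_rhs => rw [← one_mul f]
  simp only [(ℛ R c).convMul_apply, convConst_apply, convOne_apply, ← Algebra.smul_def,
    smul_mul_assoc, mul_smul_comm, Finset.mul_sum]

lemma mul_convConst_apply (f : WithConv (C →ₗ[R] A)) (a : A) (c : C) :
    (f * convConst R C a) c = f c * a := by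
  conv_rhs => rw [← mul_one f]
  simp only [(ℛ R c).convMul_apply, convConst_apply, convOne_apply, ← Algebra.commutes,
    ← Algebra.smul_def, smul_mul_assoc, mul_smul_comm, Finset.sum_mul]

lemma convConst_mul_convConst (a b : A) :
    convConst R C a * convConst R C b = convConst R C (a * b) := by
  ext c
  rw [convConst_mul_apply, convConst_apply, convConst_apply, mul_smul_comm]

lemma commute_convConst {a : A} {f : WithConv (C →ₗ[R] A)} (h : ∀ c, Commute a (f c)) :
    Commute (convConst R C a) f := by
  ext c
  rw [convConst_mul_apply, mul_convConst_apply, (h c).eq]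

lemma _root_.AlgHom.toConv_comp_antipode_mul {H : Type*} [Semiring H] [HopfAlgebra R H]
    (φ : H →ₐ[R] A) :
    toConv (φ.toLinearMap ∘ₗ HopfAlgebra.antipode R) * toConv φ.toLinearMap = 1 := by
  have := algHom_comp_convMul_distrib φ (toConv (HopfAlgebra.antipode R)) (toConv id)
  rw [antipode_mul_id, ofConv_toConv, ofConv_toConv, comp_id] at this
  rw [← toConv_ofConv (toConv _ * toConv _), ← this]
  ext c
  simp

end LinearMap

lemma TensorProduct.exists_sum_range_tmul_eq {R M N : Type*} [CommSemiring R]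
    [AddCommMonoid M] [Module R M] [AddCommMonoid N] [Module R N] (x : M ⊗[R] N) :
    ∃ (n : ℕ) (m : ℕ → M) (m' : ℕ → N), x = ∑ i ∈ Finset.range n, m i ⊗ₜ m' i := by
  obtain ⟨n, m, m', rfl⟩ := exists_sum_tmul_eq x
  refine ⟨n, fun i => if hi : i < n then m ⟨i, hi⟩ else 0,
    fun i => if hi : i < n then m' ⟨i, hi⟩ else 0, ?_⟩
  rw [← Fin.sum_univ_eq_sum_range]
  simp

lemma Finset.sum_sum_sum_comm {β ι κ ν : Type*} [AddCommMonoid β] (s : Finset ι)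
    (t : ι → Finset κ) (u : Finset ν) (f : ι → κ → ν → β) :
    ∑ l ∈ u, ∑ i ∈ s, ∑ j ∈ t i, f i j l = ∑ i ∈ s, ∑ j ∈ t i, ∑ l ∈ u, f i j l := by
  rw [Finset.sum_comm]
  exact Finset.sum_congr rfl fun _ _ => Finset.sum_comm

namespace HC

open LinearMap

section Sandwich

variable {k : Type*} [CommSemiring k] {H : Type*} [Semiring H] [Algebra k H]
  {X : Type*} [AddCommMonoid X] [Module k X]

/-- `h ⊗ (e ⊗ x) ↦ h₁ e T(h₃) ⊗ h₂ x`, the right-hand side of the (anti-)Yetter-Drinfeld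
condition with `e ⊗ x` in place of the coaction of `x`. -/
noncomputable def sandwich (Δ : H →ₗ[k] H ⊗[k] H) (T : H →ₗ[k] H) (act : H →ₗ[k] X →ₗ[k] X) :
    H ⊗[k] (H ⊗[k] X) →ₗ[k] H ⊗[k] X :=
  map (mul' k H) id ∘ₗ (TensorProduct.assoc k H H X).symm.toLinearMap ∘ₗ
    map (mul' k H) (map T (lift act) ∘ₗ (TensorProduct.assoc k H H X).toLinearMap ∘ₗ
      rTensor X (TensorProduct.comm k H H).toLinearMap) ∘ₗ
    (tensorTensorTensorComm k H (H ⊗[k] H) H X).toLinearMap ∘ₗ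
    rTensor (H ⊗[k] X) (lTensor H Δ ∘ₗ Δ)

lemma sandwich_tmul {ι κ : Type*} {Δ : H →ₗ[k] H ⊗[k] H} (T : H →ₗ[k] H)
    (act : H →ₗ[k] X →ₗ[k] X) {h : H} {s : Finset ι} {a b : ι → H} {t : ι → Finset κ}
    {c d : ι → κ → H} (hh : Δ h = ∑ i ∈ s, a i ⊗ₜ b i)
    (hb : ∀ i ∈ s, Δ (b i) = ∑ j ∈ t i, c i j ⊗ₜ d i j) (e : H) (x : X) :
    sandwich Δ T act (h ⊗ₜ (e ⊗ₜ x)) =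
      ∑ i ∈ s, ∑ j ∈ t i, (a i * e * T (d i j)) ⊗ₜ act (c i j) x := by
  have hΔ₃ : lTensor H Δ (Δ h) = ∑ i ∈ s, ∑ j ∈ t i, a i ⊗ₜ (c i j ⊗ₜ d i j) := by
    simp only [hh, map_sum, lTensor_tmul]
    exact Finset.sum_congr rfl fun i hi => by rw [hb i hi, tmul_sum]
  simp [sandwich, hΔ₃, sum_tmul, map_sum, mul_assoc]

end Sandwich

section Field

variable {k : Type} [Field k] {H : Type} [Ring H] [Algebra k H]
  {X : Type} [AddCommGroup X] [Module k X]

theorem aYDll_iff_sandwich (Δ : H →ₗ[k] H ⊗[k] H) (T : H →ₗ[k] H) (act : H →ₗ[k] X →ₗ[k] X)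
    (coact : X →ₗ[k] H ⊗[k] X) :
    AYDll Δ T act coact ↔ ∀ h x, coact (act h x) = sandwich Δ T act (h ⊗ₜ coact x) := by
  constructor
  · intro hAYD h x
    obtain ⟨n, a, b, hh⟩ := exists_sum_range_tmul_eq (Δ h)
    choose m c d hb using fun i => exists_sum_range_tmul_eq (Δ (b i))
    obtain ⟨p, e, x₀, hx⟩ := exists_sum_range_tmul_eq (coact x)
    rw [hAYD h x _ a b _ c d _ e x₀ hh (fun i _ => hb i) hx, hx, tmul_sum, map_sum]
    simp_rw [sandwich_tmul T act hh (fun i _ => hb i)]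
    exact (Finset.sum_sum_sum_comm _ _ _ _).symm
  · intro hs h x s a b t c d u e x₀ hh hb hx
    rw [hs, hx, tmul_sum, map_sum]
    simp_rw [sandwich_tmul T act hh hb]
    exact Finset.sum_sum_sum_comm _ _ _ _

end Field

section Convolution

variable {k : Type*} [CommSemiring k] {H : Type*} [Semiring H] {B : Type*} [Semiring B]
  [Algebra k B]

noncomputable def sandwichConv [Bialgebra k H] (ℓ : H →ₐ[k] B) (r : WithConv (H →ₗ[k] B))
    (T : H →ₗ[k] H) (c : B) : WithConv (H →ₗ[k] B) :=
  toConv ℓ.toLinearMap * convConst k H c * r * toConv (ℓ.toLinearMap ∘ₗ T)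

lemma sandwichConv_apply [Bialgebra k H] {ι κ : Type*} (ℓ : H →ₐ[k] B)
    (r : WithConv (H →ₗ[k] B)) (T : H →ₗ[k] H) (c : B) {h : H} {s : Finset ι} {a b : ι → H}
    {t : ι → Finset κ} {c' d : ι → κ → H} (hh : Coalgebra.comul h = ∑ i ∈ s, a i ⊗ₜ[k] b i)
    (hb : ∀ i ∈ s, Coalgebra.comul (b i) = ∑ j ∈ t i, c' i j ⊗ₜ[k] d i j) :
    sandwichConv ℓ r T c h = ∑ i ∈ s, ∑ j ∈ t i, ℓ (a i) * c * r (c' i j) * ℓ (T (d i j)) := by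
  rw [sandwichConv, mul_assoc, Coalgebra.Repr.convMul_apply ⟨s, a, b, hh.symm⟩]
  refine Finset.sum_congr rfl fun i hi => ?_
  rw [mul_convConst_apply, Coalgebra.Repr.convMul_apply ⟨t i, c' i, d i, (hb i hi).symm⟩,
    Finset.mul_sum]
  simp [mul_assoc]

lemma sandwichConv_antipode_mul_sandwichConv [HopfAlgebra k H] (ℓ : H →ₐ[k] B)
    (r r' : WithConv (H →ₗ[k] B)) (T : H →ₗ[k] H) (c c' : B)
    (hc' : ∀ x, Commute c' (r x)) :
    sandwichConv ℓ r (HopfAlgebra.antipode k) c * sandwichConv ℓ r' T c' =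
      sandwichConv ℓ (r * r') T (c * c') := by
  calc _ = toConv ℓ.toLinearMap * convConst k H c * r *
        (toConv (ℓ.toLinearMap ∘ₗ HopfAlgebra.antipode k) * toConv ℓ.toLinearMap) *
        convConst k H c' * r' * toConv (ℓ.toLinearMap ∘ₗ T) := by
          simp only [sandwichConv, mul_assoc]
    _ = toConv ℓ.toLinearMap * convConst k H c * (r * convConst k H c') * r' *
        toConv (ℓ.toLinearMap ∘ₗ T) := by
          rw [ℓ.toConv_comp_antipode_mul, mul_one, mul_assoc _ r]
    _ = _ := by
          rw [← (commute_convConst hc').eq, sandwichConv, ← convConst_mul_convConst]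
          simp only [mul_assoc]

end Convolution

section Legs

variable {k : Type*} [CommSemiring k] {H : Type*} [Semiring H]
  {N M : Type*} [AddCommMonoid N] [Module k N] [AddCommMonoid M] [Module k M]

noncomputable def mulLegs [Algebra k H] : (H ⊗[k] N) ⊗[k] (H ⊗[k] M) →ₗ[k] H ⊗[k] (N ⊗[k] M) :=
  map (mul' k H) id ∘ₗ (tensorTensorTensorComm k H N H M).toLinearMap

@[simp]
lemma mulLegs_tmul [Algebra k H] (a b : H) (n : N) (m : M) :
    mulLegs (k := k) ((a ⊗ₜ n) ⊗ₜ (b ⊗ₜ m)) = (a * b) ⊗ₜ (n ⊗ₜ m) := rfl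

-- The legs of `H ⊗ (H ⊗ H)` carry the coaction and the actions on `N` and on `M`.
local notation "ι₁" => (Algebra.TensorProduct.includeLeft : H →ₐ[k] H ⊗[k] (H ⊗[k] H))
local notation "ι₂" => toConv (AlgHom.toLinearMap (AlgHom.comp Algebra.TensorProduct.includeRight
  Algebra.TensorProduct.includeLeft : H →ₐ[k] H ⊗[k] (H ⊗[k] H)))
local notation "ι₃" => toConv (AlgHom.toLinearMap (AlgHom.comp Algebra.TensorProduct.includeRight
  Algebra.TensorProduct.includeRight : H →ₐ[k] H ⊗[k] (H ⊗[k] H)))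

lemma mulLegs_sandwich_tmul_sandwich [Bialgebra k H] (T T' : H →ₗ[k] H)
    (actN : H →ₗ[k] N →ₗ[k] N) (actM : H →ₗ[k] M →ₗ[k] M) (a b e f : H) (n : N) (m : M) :
    mulLegs (sandwich Coalgebra.comul T actN (a ⊗ₜ (e ⊗ₜ n)) ⊗ₜ
        sandwich Coalgebra.comul T' actM (b ⊗ₜ (f ⊗ₜ m))) =
      lTensor H (map (actN.flip n) (actM.flip m))
        (sandwichConv ι₁ ι₂ T (e ⊗ₜ 1) a * sandwichConv ι₁ ι₃ T' (f ⊗ₜ 1) b) := by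
  let 𝓐 := Coalgebra.Repr.arbitrary k a
  let 𝓑 := Coalgebra.Repr.arbitrary k b
  have h𝓐 := fun i (_ : i ∈ 𝓐.index) => (Coalgebra.Repr.arbitrary k (𝓐.right i)).eq.symm
  have h𝓑 := fun i (_ : i ∈ 𝓑.index) => (Coalgebra.Repr.arbitrary k (𝓑.right i)).eq.symm
  rw [sandwich_tmul T actN 𝓐.eq.symm h𝓐, sandwich_tmul T' actM 𝓑.eq.symm h𝓑,
    sandwichConv_apply _ _ _ _ 𝓐.eq.symm h𝓐, sandwichConv_apply _ _ _ _ 𝓑.eq.symm h𝓑]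
  simp [sum_tmul, tmul_sum, Finset.sum_mul, Finset.mul_sum, mul_assoc]

lemma sandwich_tmul_tmul_tmul [Bialgebra k H] {T : H →ₗ[k] H}
    {act : H →ₗ[k] N ⊗[k] M →ₗ[k] N ⊗[k] M} {actN : H →ₗ[k] N →ₗ[k] N} {actM : H →ₗ[k] M →ₗ[k] M}
    (hact : ∀ x n m, act x (n ⊗ₜ m) = map (actN.flip n) (actM.flip m) (Coalgebra.comul x))
    (h e : H) (n : N) (m : M) :
    sandwich Coalgebra.comul T act (h ⊗ₜ (e ⊗ₜ (n ⊗ₜ m))) =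
      lTensor H (map (actN.flip n) (actM.flip m)) (sandwichConv ι₁ (ι₂ * ι₃) T (e ⊗ₜ 1) h) := by
  let 𝓗 := Coalgebra.Repr.arbitrary k h
  have h𝓗 := fun i (_ : i ∈ 𝓗.index) => (Coalgebra.Repr.arbitrary k (𝓗.right i)).eq.symm
  rw [sandwich_tmul T act 𝓗.eq.symm h𝓗, sandwichConv_apply _ _ _ _ 𝓗.eq.symm h𝓗]
  simp only [map_sum]
  refine Finset.sum_congr rfl fun i _ => Finset.sum_congr rfl fun j _ => ?_
  rw [hact, (Coalgebra.Repr.arbitrary k _).convMul_apply]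
  simp [← (Coalgebra.Repr.arbitrary k _).eq, Finset.mul_sum, Finset.sum_mul, tmul_sum]

lemma sum_mulLegs_sandwich_tmul_sandwich [HopfAlgebra k H] {ι : Type*} {T : H →ₗ[k] H}
    {act : H →ₗ[k] N ⊗[k] M →ₗ[k] N ⊗[k] M} {actN : H →ₗ[k] N →ₗ[k] N}
    {actM : H →ₗ[k] M →ₗ[k] M}
    (hact : ∀ x n m, act x (n ⊗ₜ m) = map (actN.flip n) (actM.flip m) (Coalgebra.comul x))
    {h : H} (𝓗 : Coalgebra.Repr k h ι) (w : H ⊗[k] N) (w' : H ⊗[k] M) :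
    ∑ i ∈ 𝓗.index, mulLegs (sandwich Coalgebra.comul (HopfAlgebra.antipode k) actN
        (𝓗.left i ⊗ₜ w) ⊗ₜ sandwich Coalgebra.comul T actM (𝓗.right i ⊗ₜ w')) =
      sandwich Coalgebra.comul T act (h ⊗ₜ mulLegs (w ⊗ₜ w')) := by
  induction w using TensorProduct.induction_on with
  | zero => simp
  | add w₁ w₂ hw₁ hw₂ =>
    simp only [tmul_add, add_tmul, map_add, Finset.sum_add_distrib, hw₁, hw₂]
  | tmul e n =>
    induction w' using TensorProduct.induction_on with
    | zero => simp
    | add w₁ w₂ hw₁ hw₂ =>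
      simp only [tmul_add, map_add, Finset.sum_add_distrib, hw₁, hw₂]
    | tmul f m =>
      have hcomm : ∀ x, Commute (f ⊗ₜ[k] (1 : H ⊗[k] H)) (ι₂ x) := fun x => by
        simp [Commute, SemiconjBy, Algebra.TensorProduct.tmul_mul_tmul]
      simp_rw [mulLegs_sandwich_tmul_sandwich, ← map_sum, ← 𝓗.convMul_apply,
        sandwichConv_antipode_mul_sandwichConv _ _ _ _ _ _ hcomm, mulLegs_tmul,
        sandwich_tmul_tmul_tmul hact, Algebra.TensorProduct.tmul_mul_tmul, one_mul]

end Legs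

section Field

variable {k : Type} [Field k] {H : Type} [Ring H] [Algebra k H]
  {N : Type} [AddCommGroup N] [Module k N] {M : Type} [AddCommGroup M] [Module k M]

lemma diagAct_tmul (Δ : H →ₗ[k] H ⊗[k] H) (actN : H →ₗ[k] N →ₗ[k] N)
    (actM : H →ₗ[k] M →ₗ[k] M) (h : H) (n : N) (m : M) :
    diagAct Δ actN actM h (n ⊗ₜ m) = map (actN.flip n) (actM.flip m) (Δ h) := by
  simp only [diagAct, curry_apply, comp_apply, map_tmul, id_coe, id_eq, LinearEquiv.coe_coe]
  induction Δ h using TensorProduct.induction_on with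
  | zero => simp
  | tmul x y => simp
  | add x y hx hy => simp only [add_tmul, map_add, hx, hy]

lemma codiagCoact_tmul (coactN : N →ₗ[k] H ⊗[k] N) (coactM : M →ₗ[k] H ⊗[k] M)
    (n : N) (m : M) :
    codiagCoact coactN coactM (n ⊗ₜ m) = mulLegs (coactN n ⊗ₜ coactM m) := rfl

end Field

end HC

open HC TensorProduct

theorem stmt2_general {k : Type} [Field k] {H : Type} [Ring H] [HopfAlgebra k H]
    (Sinv : H →ₗ[k] H)
    {N : Type} [AddCommGroup N] [Module k N]
    {M : Type} [AddCommGroup M] [Module k M]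
    (actN : H →ₗ[k] N →ₗ[k] N) (coactN : N →ₗ[k] H ⊗[k] N)
    (actM : H →ₗ[k] M →ₗ[k] M) (coactM : M →ₗ[k] H ⊗[k] M)
    (hYD : YDll (Coalgebra.comul (R := k)) (HopfAlgebra.antipode (R := k)) actN coactN)
    (hAYD : AYDll (Coalgebra.comul (R := k)) Sinv actM coactM) :
    AYDll (Coalgebra.comul (R := k)) Sinv
      (diagAct (Coalgebra.comul (R := k)) actN actM)
      (codiagCoact coactN coactM) := by
  have hN := (aYDll_iff_sandwich _ _ _ _).1 hYD
  have hM := (aYDll_iff_sandwich _ _ _ _).1 hAYD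
  refine (aYDll_iff_sandwich _ _ _ _).2 fun h z => ?_
  induction z using TensorProduct.induction_on with
  | zero => simp
  | add z₁ z₂ h₁ h₂ => simp only [map_add, tmul_add, h₁, h₂]
  | tmul n m =>
    let 𝓗 := Coalgebra.Repr.arbitrary k h
    rw [diagAct_tmul, ← 𝓗.eq, map_sum, map_sum]
    simp only [TensorProduct.map_tmul, LinearMap.flip_apply, codiagCoact_tmul, hN, hM]
    exact sum_mulLegs_sandwich_tmul_sandwich (diagAct_tmul _ actN actM) 𝓗 _ _

/-- If `N` is a left-left Yetter-Drinfeld module and `M` a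
left-left anti-Yetter-Drinfeld module over a Hopf algebra `H` with bijective
antipode, then `N ⊗ M` with the diagonal action and codiagonal coaction is a
left-left anti-Yetter-Drinfeld module. -/
theorem stmt2 {k : Type} [Field k] {H : Type} [Ring H] [HopfAlgebra k H]
    (Sinv : H →ₗ[k] H)
    (hS : ∀ h : H, Sinv (HopfAlgebra.antipode (R := k) h) = h)
    (hS' : ∀ h : H, HopfAlgebra.antipode (R := k) (Sinv h) = h)
    {N : Type} [AddCommGroup N] [Module k N]
    {M : Type} [AddCommGroup M] [Module k M]
    (actN : H →ₗ[k] N →ₗ[k] N) (coactN : N →ₗ[k] H ⊗[k] N)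
    (actM : H →ₗ[k] M →ₗ[k] M) (coactM : M →ₗ[k] H ⊗[k] M)
    (hactN : IsLAct actN) (hactM : IsLAct actM)
    (hcoactN : IsLCoact (Coalgebra.comul (R := k)) (Coalgebra.counit (R := k)) coactN)
    (hcoactM : IsLCoact (Coalgebra.comul (R := k)) (Coalgebra.counit (R := k)) coactM)
    (hYD : YDll (Coalgebra.comul (R := k)) (HopfAlgebra.antipode (R := k)) actN coactN)
    (hAYD : AYDll (Coalgebra.comul (R := k)) Sinv actM coactM) :
    AYDll (Coalgebra.comul (R := k)) Sinv
      (diagAct (Coalgebra.comul (R := k)) actN actM)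
      (codiagCoact coactN coactM) :=
  stmt2_general Sinv actN coactN actM coactM hYD hAYD
end

section
/- Let H be a Hopf algebra with bijective antipode, M a stable right-left anti-Yetter-Drinfeld module over H, and C a left H-module coalgebra. Then the operator τ_n on M ⊗_H C^{⊗(n+1)} defined by τ_n(m ⊗ c_0 ⊗ ⋯ ⊗ c_n) = m^{(0)} ⊗ c_1 ⊗ ⋯ ⊗ c_n ⊗ m^{(-1)} c_0 satisfies (τ_n)^{n+1} = id. -/
open TensorProduct

namespace HC

variable {k : Type} [Field k]
variable {H : Type} [Ring H] [Algebra k H]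
variable {M : Type} [AddCommGroup M] [Module k M]

def IsRAct (act : H →ₗ[k] M →ₗ[k] M) : Prop :=
  act 1 = LinearMap.id ∧ ∀ g h : H, act (g * h) = (act h) ∘ₗ (act g)

def AYDrl (Δ : H →ₗ[k] H ⊗[k] H) (S : H →ₗ[k] H)
    (act : H →ₗ[k] M →ₗ[k] M) (coact : M →ₗ[k] H ⊗[k] M) : Prop :=
  ∀ (h : H) (m : M) (s : Finset ℕ) (a b : ℕ → H)
    (t : ℕ → Finset ℕ) (c d : ℕ → ℕ → H)
    (u : Finset ℕ) (e : ℕ → H) (m0 : ℕ → M),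
    Δ h = ∑ i ∈ s, a i ⊗ₜ b i →
    (∀ i ∈ s, Δ (b i) = ∑ j ∈ t i, c i j ⊗ₜ d i j) →
    coact m = ∑ l ∈ u, e l ⊗ₜ m0 l →
    coact (act h m) = ∑ i ∈ s, ∑ j ∈ t i, ∑ l ∈ u,
      (S (d i j) * e l * a i) ⊗ₜ act (c i j) (m0 l)

def StableL (act : H →ₗ[k] M →ₗ[k] M) (coact : M →ₗ[k] H ⊗[k] M) : Prop :=
  ∀ (m : M) (u : Finset ℕ) (e : ℕ → H) (m0 : ℕ → M),
    coact m = ∑ l ∈ u, e l ⊗ₜ m0 l →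
    ∑ l ∈ u, act (e l) (m0 l) = m

variable {C : Type} [AddCommGroup C] [Module k C]

/-- Coalgebra axioms for `(ΔC, εC)`. -/
def IsCoalg (ΔC : C →ₗ[k] C ⊗[k] C) (εC : C →ₗ[k] k) : Prop :=
  ((TensorProduct.map ΔC LinearMap.id) ∘ₗ ΔC =
    (TensorProduct.assoc k C C C).symm.toLinearMap ∘ₗ
      (TensorProduct.map LinearMap.id ΔC) ∘ₗ ΔC) ∧
  (∀ c : C, (TensorProduct.lid k C) ((TensorProduct.map εC LinearMap.id) (ΔC c)) = c) ∧
  (∀ c : C, (TensorProduct.rid k C) ((TensorProduct.map LinearMap.id εC) (ΔC c)) = c)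

/-- `C` is an `H`-module coalgebra: `Δ(hc) = h⁽¹⁾c⁽¹⁾ ⊗ h⁽²⁾c⁽²⁾` and
`ε(hc) = ε(h)ε(c)`. -/
def IsModCoalg (Δ : H →ₗ[k] H ⊗[k] H) (ε : H →ₗ[k] k)
    (ΔC : C →ₗ[k] C ⊗[k] C) (εC : C →ₗ[k] k)
    (actC : H →ₗ[k] C →ₗ[k] C) : Prop :=
  (∀ (h : H) (c : C) (s : Finset ℕ) (a b : ℕ → H)
      (u : Finset ℕ) (c1 c2 : ℕ → C),
    Δ h = ∑ i ∈ s, a i ⊗ₜ b i →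
    ΔC c = ∑ j ∈ u, c1 j ⊗ₜ c2 j →
    ΔC (actC h c) = ∑ i ∈ s, ∑ j ∈ u,
      actC (a i) (c1 j) ⊗ₜ actC (b i) (c2 j)) ∧
  (∀ (h : H) (c : C), εC (actC h c) = ε h * εC c)




variable (C : Type) [AddCommGroup C] [Module k C]
variable {M : Type} [AddCommGroup M] [Module k M]

/-- The `(n+1)`-fold tensor power `C^{⊗(n+1)}` (as a bundled module). -/
noncomputable def Tpow : ℕ → ModuleCat.{0} k
  | 0 => ModuleCat.of k C
  | n + 1 => ModuleCat.of k (C ⊗[k] ↥(Tpow n))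

variable {C}

/-- Appending a factor at the end: `(c_1 ⊗ ⋯ ⊗ c_n) ⊗ c ↦ c_1 ⊗ ⋯ ⊗ c_n ⊗ c`. -/
noncomputable def snoc :
    (n : ℕ) → (↥(Tpow (k := k) C n) ⊗[k] C →ₗ[k] ↥(Tpow (k := k) C (n+1)))
  | 0 => LinearMap.id
  | n + 1 =>
    (TensorProduct.map LinearMap.id (snoc n)) ∘ₗ
      (TensorProduct.assoc k C ↥(Tpow (k := k) C n) C).toLinearMap

/-- The diagonal action of `H` on `C^{⊗(n+1)}`:
`h (c_0 ⊗ ⋯ ⊗ c_n) = h⁽¹⁾c_0 ⊗ ⋯ ⊗ h⁽ⁿ⁺¹⁾c_n`. -/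
noncomputable def dAct (Δ : H →ₗ[k] H ⊗[k] H) (actC : H →ₗ[k] C →ₗ[k] C) :
    (n : ℕ) → (H ⊗[k] ↥(Tpow (k := k) C n) →ₗ[k] ↥(Tpow (k := k) C n))
  | 0 => TensorProduct.lift actC
  | n + 1 =>
    (TensorProduct.map (TensorProduct.lift actC) (dAct Δ actC n)) ∘ₗ
      (TensorProduct.tensorTensorTensorComm k H H C ↥(Tpow (k := k) C n)).toLinearMap ∘ₗ
      (TensorProduct.map Δ LinearMap.id)

/-- The cyclic operator `τ_n (m ⊗ c_0 ⊗ ⋯ ⊗ c_n) =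
m⁽⁰⁾ ⊗ c_1 ⊗ ⋯ ⊗ c_n ⊗ m⁽⁻¹⁾ c_0` on `M ⊗ C^{⊗(n+1)}`. -/
noncomputable def cyc (actC : H →ₗ[k] C →ₗ[k] C) (coactM : M →ₗ[k] H ⊗[k] M) :
    (n : ℕ) → (M ⊗[k] ↥(Tpow (k := k) C n) →ₗ[k] M ⊗[k] ↥(Tpow (k := k) C n))
  | 0 =>
    (TensorProduct.map LinearMap.id (TensorProduct.lift actC)) ∘ₗ
      (TensorProduct.assoc k M H C).toLinearMap ∘ₗ
      (TensorProduct.map ((TensorProduct.comm k H M).toLinearMap ∘ₗ coactM) LinearMap.id)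
  | n + 1 =>
    (TensorProduct.map LinearMap.id
        ((snoc (n := n)) ∘ₗ (TensorProduct.comm k C ↥(Tpow (k := k) C n)).toLinearMap)) ∘ₗ
      (TensorProduct.leftComm k C M ↥(Tpow (k := k) C n)).toLinearMap ∘ₗ
      (TensorProduct.map (TensorProduct.lift actC) LinearMap.id) ∘ₗ
      (TensorProduct.tensorTensorTensorComm k H M C ↥(Tpow (k := k) C n)).toLinearMap ∘ₗ
      (TensorProduct.map coactM LinearMap.id)

/-- The subspace of `M ⊗ C^{⊗(n+1)}` spanned by the relations defining
the balanced tensor product `M ⊗_H C^{⊗(n+1)}` (for a right action on `M`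
in curried form and the diagonal action on `C^{⊗(n+1)}`). -/
noncomputable def rel (Δ : H →ₗ[k] H ⊗[k] H) (actC : H →ₗ[k] C →ₗ[k] C)
    (actM : H →ₗ[k] M →ₗ[k] M) (n : ℕ) :
    Submodule k (M ⊗[k] ↥(Tpow (k := k) C n)) :=
  Submodule.span k
    {z | ∃ (h : H) (m : M) (x : ↥(Tpow (k := k) C n)),
      z = (actM h m) ⊗ₜ x - m ⊗ₜ (dAct Δ actC n (h ⊗ₜ x))}


end HC

/-!
Each application of `τ_n` moves the front factor to the back and acts on it by one more
coaction leg of `m`. By coassociativity these legs assemble into the iterated coproduct of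
`m⁽⁻¹⁾`, so already in `M ⊗ C^{⊗(n+1)}` one has `τ_n^{n+1} (m ⊗ x) = m⁽⁰⁾ ⊗ m⁽⁻¹⁾ x`. For the
induction the first `n + 1` factors are rotated past an arbitrary untouched block `w`.
Modulo the balancing relations `m⁽⁰⁾ ⊗ m⁽⁻¹⁾ x ≡ m⁽⁰⁾ m⁽⁻¹⁾ ⊗ x`, which is `m ⊗ x` by stability.
-/

namespace HC

section Coaction

variable {k H M V X : Type*} [CommSemiring k] [AddCommMonoid H] [Module k H]
  [AddCommMonoid M] [Module k M] [AddCommMonoid V] [Module k V] [AddCommMonoid X] [Module k X]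

/-- `coactThrough coact f m = m⁽⁰⁾ ⊗ f (m⁽⁻¹⁾)` in Sweedler notation. -/
noncomputable def coactThrough (coact : M →ₗ[k] H ⊗[k] M) :
    (H →ₗ[k] V) →ₗ[k] M →ₗ[k] M ⊗[k] V :=
  (LinearMap.llcomp k M (H ⊗[k] M) (M ⊗[k] V)).flip coact ∘ₗ
    LinearMap.llcomp k (H ⊗[k] M) (V ⊗[k] M) (M ⊗[k] V) (TensorProduct.comm k V M).toLinearMap ∘ₗ
    LinearMap.rTensorHom M

theorem coactThrough_apply (coact : M →ₗ[k] H ⊗[k] M) (f : H →ₗ[k] V) (m : M) :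
    coactThrough coact f m = TensorProduct.comm k V M (f.rTensor M (coact m)) :=
  rfl

theorem coactThrough_comp {Δ : H →ₗ[k] H ⊗[k] H} {coact : M →ₗ[k] H ⊗[k] M}
    (hco : TensorProduct.map Δ LinearMap.id ∘ₗ coact =
      (TensorProduct.assoc k H H M).symm.toLinearMap ∘ₗ
        TensorProduct.map LinearMap.id coact ∘ₗ coact)
    (T : M ⊗[k] X →ₗ[k] M ⊗[k] V) (f : H →ₗ[k] X) (G : H →ₗ[k] H →ₗ[k] V)
    (hT : ∀ h m, T (m ⊗ₜ f h) = coactThrough coact (G h) m) (m : M) :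
    T (coactThrough coact f m) = coactThrough coact (lift G ∘ₗ Δ) m := by
  have hTf : T ∘ₗ (TensorProduct.comm k X M).toLinearMap ∘ₗ f.rTensor M =
      (TensorProduct.comm k V M).toLinearMap ∘ₗ (lift G).rTensor M ∘ₗ
        (TensorProduct.assoc k H H M).symm.toLinearMap ∘ₗ coact.lTensor H := by
    ext h m'
    change T (m' ⊗ₜ f h) = _
    rw [hT, coactThrough_apply]
    change _ = TensorProduct.comm k V M ((lift G).rTensor M
      ((TensorProduct.assoc k H H M).symm (h ⊗ₜ coact m')))
    induction coact m' with
    | zero => simp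
    | tmul g m'' => simp
    | add a b ha hb => simp only [map_add, TensorProduct.tmul_add, ha, hb]
  calc T (coactThrough coact f m)
      = (T ∘ₗ (TensorProduct.comm k X M).toLinearMap ∘ₗ f.rTensor M) (coact m) := rfl
    _ = (TensorProduct.comm k V M).toLinearMap ((lift G).rTensor M
          ((TensorProduct.map Δ LinearMap.id ∘ₗ coact) m)) := by
      rw [hTf, hco]; rfl
    _ = coactThrough coact (lift G ∘ₗ Δ) m := by
      rw [coactThrough_apply, LinearMap.rTensor_comp]; rfl

end Coaction

section TensorPower

variable {k : Type} [Field k] {C : Type} [AddCommGroup C] [Module k C]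

noncomputable def Tpow.cons {n : ℕ} : C →ₗ[k] Tpow (k := k) C n →ₗ[k] Tpow (k := k) C (n + 1) :=
  TensorProduct.mk k C (Tpow (k := k) C n)

theorem Tpow.induction_on {n : ℕ} {P : Tpow (k := k) C (n + 1) → Prop}
    (x : Tpow (k := k) C (n + 1)) (zero : P 0) (cons : ∀ c y, P (Tpow.cons c y))
    (add : ∀ x y, P x → P y → P (x + y)) : P x :=
  TensorProduct.induction_on (motive := P) x zero cons add

noncomputable def tcast {a b : ℕ} (h : a = b) : Tpow (k := k) C a →ₗ[k] Tpow (k := k) C b :=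
  h ▸ LinearMap.id

theorem tcast_rfl {a : ℕ} (x : Tpow (k := k) C a) : tcast rfl x = x :=
  rfl

theorem tcast_tcast {a b c : ℕ} (h : a = b) (h' : b = c) (x : Tpow (k := k) C a) :
    tcast h' (tcast h x) = tcast (h.trans h') x := by
  subst h h'; rfl

theorem tcast_cons {a b : ℕ} (h : a = b) (c : C) (x : Tpow (k := k) C a) :
    tcast (congrArg (· + 1) h) (Tpow.cons c x) = Tpow.cons c (tcast h x) := by
  subst h; rfl

/-- The index `b + 1 + a` (rather than `a + b + 1`) makes the recursion on `a` typecheck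
definitionally. -/
noncomputable def concat : (a b : ℕ) →
    (Tpow (k := k) C a ⊗[k] Tpow (k := k) C b →ₗ[k] Tpow (k := k) C (b + 1 + a))
  | 0, _ => LinearMap.id
  | a + 1, b =>
    TensorProduct.map LinearMap.id (concat a b) ∘ₗ
      (TensorProduct.assoc k C (Tpow (k := k) C a) (Tpow (k := k) C b)).toLinearMap

theorem concat_zero_right : ∀ (b : ℕ) (w : Tpow (k := k) C b) (c : C),
    snoc b (w ⊗ₜ c) = tcast (by omega) (curry (concat b 0) w c)
  | 0, _, _ => rfl
  | b + 1, w, c => by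
    induction w using Tpow.induction_on with
    | zero => rw [TensorProduct.zero_tmul, map_zero, map_zero]; exact (map_zero _).symm
    | cons c' w' =>
      exact (congrArg (Tpow.cons c') (concat_zero_right b w' c)).trans (tcast_cons _ c' _).symm
    | add x y hx hy =>
      rw [TensorProduct.add_tmul, map_add, hx, hy, map_add]; exact (map_add _ _ _).symm

theorem snoc_concat : ∀ (n b : ℕ) (y : Tpow (k := k) C n) (w : Tpow (k := k) C b) (c : C),
    snoc (b + 1 + n) (concat n b (y ⊗ₜ w) ⊗ₜ c) =
      tcast (by omega) (concat n (b + 1) (y ⊗ₜ snoc b (w ⊗ₜ c)))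
  | 0, _, _, _, _ => rfl
  | n + 1, b, y, w, c => by
    induction y using Tpow.induction_on with
    | zero => simp only [TensorProduct.zero_tmul, map_zero]
    | cons c' y' =>
      exact (congrArg (Tpow.cons c') (snoc_concat n b y' w c)).trans (tcast_cons _ c' _).symm
    | add x y hx hy => simp only [TensorProduct.add_tmul, map_add, hx, hy]

theorem concat_cons_right : ∀ (b n : ℕ) (w : Tpow (k := k) C b) (c : C) (z : Tpow (k := k) C n),
    concat b (n + 1) (w ⊗ₜ Tpow.cons c z) =
      tcast (by omega) (concat (b + 1) n (snoc b (w ⊗ₜ c) ⊗ₜ z))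
  | 0, _, _, _, _ => rfl
  | b + 1, n, w, c, z => by
    induction w using Tpow.induction_on with
    | zero => simp only [TensorProduct.zero_tmul, map_zero]
    | cons c' w' =>
      exact (congrArg (Tpow.cons c') (concat_cons_right b n w' c z)).trans (tcast_cons _ c' _).symm
    | add x y hx hy => simp only [TensorProduct.add_tmul, map_add, hx, hy]

end TensorPower

section Cyclic

variable {k : Type} [Field k] {H : Type} [Ring H] [Algebra k H]
  {M : Type} [AddCommGroup M] [Module k M] {C : Type} [AddCommGroup C] [Module k C]

theorem cyc_zero_tmul (actC : H →ₗ[k] C →ₗ[k] C) (coact : M →ₗ[k] H ⊗[k] M) (m : M)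
    (x : C) :
    cyc actC coact 0 (m ⊗ₜ x) = coactThrough coact (actC.flip x) m := by
  rw [coactThrough_apply]
  change TensorProduct.map LinearMap.id (lift actC)
    (TensorProduct.assoc k M H C (TensorProduct.comm k H M (coact m) ⊗ₜ x)) = _
  induction coact m with
  | zero => simp
  | tmul h m' => simp
  | add a b ha hb => simp only [map_add, TensorProduct.add_tmul, ha, hb]

theorem cyc_cons (actC : H →ₗ[k] C →ₗ[k] C) (coact : M →ₗ[k] H ⊗[k] M) {n : ℕ} (m : M) (c : C)
    (y : Tpow (k := k) C n) :
    cyc actC coact (n + 1) (m ⊗ₜ Tpow.cons c y) =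
      coactThrough coact (curry (snoc n) y ∘ₗ actC.flip c) m := by
  rw [coactThrough_apply]
  change TensorProduct.map LinearMap.id (snoc n ∘ₗ (TensorProduct.comm k C _).toLinearMap)
    (TensorProduct.leftComm k C M _ (TensorProduct.map (lift actC) LinearMap.id
      (TensorProduct.tensorTensorTensorComm k H M C _ (coact m ⊗ₜ (c ⊗ₜ y))))) = _
  induction coact m with
  | zero => simp
  | tmul h m' => simp
  | add a b ha hb => simp only [map_add, TensorProduct.add_tmul, ha, hb]

theorem dAct_cons (Δ : H →ₗ[k] H ⊗[k] H) (actC : H →ₗ[k] C →ₗ[k] C) {n : ℕ} (c : C)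
    (y : Tpow (k := k) C n) :
    (curry (dAct Δ actC (n + 1))).flip (Tpow.cons c y) =
      lift (Tpow.cons.compl₁₂ (actC.flip c) ((curry (dAct Δ actC n)).flip y)) ∘ₗ Δ := by
  ext h
  change TensorProduct.map (lift actC) (dAct Δ actC n)
      (TensorProduct.tensorTensorTensorComm k H H C _ (Δ h ⊗ₜ (c ⊗ₜ y))) =
    lift (Tpow.cons.compl₁₂ (actC.flip c) ((curry (dAct Δ actC n)).flip y)) (Δ h)
  induction Δ h with
  | zero => simp only [TensorProduct.zero_tmul, map_zero]; rfl
  | tmul g g' => rfl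
  | add a b ha hb => simp only [map_add, TensorProduct.add_tmul, ha, hb]; rfl

theorem cyc_pow_concat {Δ : H →ₗ[k] H ⊗[k] H} (actC : H →ₗ[k] C →ₗ[k] C)
    {coact : M →ₗ[k] H ⊗[k] M}
    (hco : TensorProduct.map Δ LinearMap.id ∘ₗ coact =
      (TensorProduct.assoc k H H M).symm.toLinearMap ∘ₗ
        TensorProduct.map LinearMap.id coact ∘ₗ coact) :
    ∀ (n b N : ℕ) (h₁ : b + 1 + n = N) (h₂ : n + 1 + b = N) (m : M) (y : Tpow (k := k) C n)
      (w : Tpow (k := k) C b),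
      (cyc actC coact N ^ (n + 1)) (m ⊗ₜ tcast h₁ (concat n b (y ⊗ₜ w))) =
        coactThrough coact
          (tcast h₂ ∘ₗ curry (concat b n) w ∘ₗ (curry (dAct Δ actC n)).flip y) m
  | 0, b, _, rfl, h₂, m, y, w => by
    rw [pow_one, tcast_rfl]
    refine (cyc_cons actC coact m y w).trans (congrArg (coactThrough coact · m) ?_)
    ext g
    exact concat_zero_right b w (actC g y)
  | n + 1, b, _, rfl, h₂, m, y, w => by
    induction y using Tpow.induction_on with
    | zero => simp
    | add y y' hy hy' =>
      simp only [TensorProduct.add_tmul, TensorProduct.tmul_add, map_add, hy, hy',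
        LinearMap.comp_add, LinearMap.add_apply]
    | cons c y =>
      let G : H →ₗ[k] H →ₗ[k] Tpow (k := k) C (b + 1 + (n + 1)) :=
        (curry (tcast (by omega) ∘ₗ concat (b + 1) n)).compl₁₂
          (curry (snoc b) w ∘ₗ actC.flip c) ((curry (dAct Δ actC n)).flip y)
      rw [pow_succ, Module.End.mul_apply, tcast_rfl]
      refine (congrArg _ (cyc_cons actC coact m c (concat n b (y ⊗ₜ w)))).trans ?_
      rw [coactThrough_comp hco _ _ G, dAct_cons]
      · have hG : lift G = tcast h₂ ∘ₗ curry (concat b (n + 1)) w ∘ₗ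
            lift (Tpow.cons.compl₁₂ (actC.flip c) ((curry (dAct Δ actC n)).flip y)) := by
          refine TensorProduct.ext' fun g h => ?_
          change tcast _ (concat (b + 1) n (snoc b (w ⊗ₜ actC g c) ⊗ₜ dAct Δ actC n (h ⊗ₜ y))) =
            tcast h₂ (concat b (n + 1) (w ⊗ₜ Tpow.cons (actC g c) (dAct Δ actC n (h ⊗ₜ y))))
          rw [concat_cons_right, tcast_tcast]
        rw [hG, LinearMap.comp_assoc, LinearMap.comp_assoc]
      · intro g m'
        simp only [LinearMap.comp_apply, curry_apply, LinearMap.flip_apply]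
        rw [snoc_concat]
        exact cyc_pow_concat actC hco n (b + 1) _ _ (by omega) m' y (snoc b (w ⊗ₜ actC g c))

theorem cyc_pow_tmul {Δ : H →ₗ[k] H ⊗[k] H} (actC : H →ₗ[k] C →ₗ[k] C)
    {coact : M →ₗ[k] H ⊗[k] M}
    (hco : TensorProduct.map Δ LinearMap.id ∘ₗ coact =
      (TensorProduct.assoc k H H M).symm.toLinearMap ∘ₗ
        TensorProduct.map LinearMap.id coact ∘ₗ coact) :
    ∀ (n : ℕ) (m : M) (x : Tpow (k := k) C n),
      (cyc actC coact n ^ (n + 1)) (m ⊗ₜ x) =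
        coactThrough coact ((curry (dAct Δ actC n)).flip x) m
  | 0, m, x => by
    rw [pow_one]
    exact cyc_zero_tmul actC coact m x
  | n + 1, m, x => by
    induction x using Tpow.induction_on with
    | zero => simp
    | add x x' hx hx' =>
      simp only [TensorProduct.tmul_add, map_add, hx, hx', LinearMap.add_apply]
    | cons c y =>
      rw [pow_succ, Module.End.mul_apply, cyc_cons, dAct_cons,
        coactThrough_comp hco _ _ (Tpow.cons.compl₁₂ (actC.flip c) ((curry (dAct Δ actC n)).flip y))]
      intro g m'
      simp only [LinearMap.comp_apply, curry_apply]
      rw [concat_zero_right]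
      exact cyc_pow_concat actC hco n 0 (n + 1) _ rfl m' y (actC g c)

theorem coactThrough_sub_mem_rel (Δ : H →ₗ[k] H ⊗[k] H) (actC : H →ₗ[k] C →ₗ[k] C)
    (actM : H →ₗ[k] M →ₗ[k] M) (coact : M →ₗ[k] H ⊗[k] M) {n : ℕ} (m : M)
    (x : Tpow (k := k) C n) :
    coactThrough coact ((curry (dAct Δ actC n)).flip x) m - lift actM (coact m) ⊗ₜ x ∈
      rel Δ actC actM n := by
  rw [coactThrough_apply]
  induction coact m with
  | zero => simp
  | tmul h m' =>
    rw [← neg_sub]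
    exact neg_mem (Submodule.subset_span ⟨h, m', x, by simp⟩)
  | add a b ha hb =>
    rw [map_add, map_add, map_add, TensorProduct.add_tmul, add_sub_add_comm]
    exact add_mem ha hb

end Cyclic

theorem exists_finset_nat_eq_sum_tmul {R A B : Type*} [CommSemiring R] [AddCommMonoid A]
    [Module R A] [AddCommMonoid B] [Module R B] (x : A ⊗[R] B) :
    ∃ (u : Finset ℕ) (e : ℕ → A) (f : ℕ → B), x = ∑ l ∈ u, e l ⊗ₜ f l := by
  classical
  obtain ⟨S, rfl⟩ := TensorProduct.exists_finset x
  let p : ℕ → A × B := fun l => if h : l < S.card then S.equivFin.symm ⟨l, h⟩ else 0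
  refine ⟨Finset.range S.card, fun l => (p l).1, fun l => (p l).2, ?_⟩
  rw [Finset.sum_range, ← Finset.sum_coe_sort S, ← S.equivFin.symm.sum_comp]
  simp [p]

theorem lift_coact_of_stableL {k H M : Type} [Field k] [Ring H] [Algebra k H] [AddCommGroup M]
    [Module k M] {act : H →ₗ[k] M →ₗ[k] M} {coact : M →ₗ[k] H ⊗[k] M}
    (hstable : StableL act coact) (m : M) : lift act (coact m) = m := by
  obtain ⟨u, e, m₀, hm⟩ := exists_finset_nat_eq_sum_tmul (coact m)
  rw [hm, map_sum]
  exact hstable m u e m₀ hm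

end HC

open HC TensorProduct

theorem stmt10_general {k : Type} [Field k] {H : Type} [Ring H] [HopfAlgebra k H]
    {M : Type} [AddCommGroup M] [Module k M]
    (actM : H →ₗ[k] M →ₗ[k] M) (coactM : M →ₗ[k] H ⊗[k] M)
    (hcoactM : IsLCoact (Coalgebra.comul (R := k)) (Coalgebra.counit (R := k)) coactM)
    (hstable : StableL actM coactM)
    {C : Type} [AddCommGroup C] [Module k C]
    (actC : H →ₗ[k] C →ₗ[k] C) :
    ∀ (n : ℕ) (z : M ⊗[k] ↥(Tpow (k := k) C n)),
      ((cyc actC coactM n) ^ (n + 1)) z - z ∈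
        rel (Coalgebra.comul (R := k)) actC actM n := by
  intro n z
  induction z using TensorProduct.induction_on with
  | zero => simp
  | add x y hx hy =>
    rw [map_add, add_sub_add_comm]
    exact add_mem hx hy
  | tmul m x =>
    rw [cyc_pow_tmul actC hcoactM.1]
    simpa only [lift_coact_of_stableL hstable] using
      coactThrough_sub_mem_rel _ actC actM coactM m x

/-- For a stable right-left anti-Yetter-Drinfeld module `M`
and a left `H`-module coalgebra `C`, the cyclic operator `τ_n` on
`M ⊗_H C^{⊗(n+1)}` satisfies `(τ_n)^{n+1} = id` (i.e. on the balanced tensor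
product, `(τ̃_n)^{n+1} z ≡ z` modulo the balancing relations). -/
theorem stmt10 {k : Type} [Field k] {H : Type} [Ring H] [HopfAlgebra k H]
    (Sinv : H →ₗ[k] H)
    (hS : ∀ h : H, Sinv (HopfAlgebra.antipode (R := k) h) = h)
    (hS' : ∀ h : H, HopfAlgebra.antipode (R := k) (Sinv h) = h)
    {M : Type} [AddCommGroup M] [Module k M]
    (actM : H →ₗ[k] M →ₗ[k] M) (coactM : M →ₗ[k] H ⊗[k] M)
    (hactM : IsRAct actM)
    (hcoactM : IsLCoact (Coalgebra.comul (R := k)) (Coalgebra.counit (R := k)) coactM)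
    (hAYD : AYDrl (Coalgebra.comul (R := k)) (HopfAlgebra.antipode (R := k)) actM coactM)
    (hstable : StableL actM coactM)
    {C : Type} [AddCommGroup C] [Module k C]
    (ΔC : C →ₗ[k] C ⊗[k] C) (εC : C →ₗ[k] k) (actC : H →ₗ[k] C →ₗ[k] C)
    (hC : IsCoalg ΔC εC) (hactC : IsLAct actC)
    (hmodcoalg : IsModCoalg (Coalgebra.comul (R := k)) (Coalgebra.counit (R := k))
      ΔC εC actC) :
    ∀ (n : ℕ) (z : M ⊗[k] ↥(Tpow (k := k) C n)),
      ((cyc actC coactM n) ^ (n + 1)) z - z ∈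
        rel (Coalgebra.comul (R := k)) actC actM n :=
  stmt10_general actM coactM hcoactM hstable actC
end
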